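/- arXiv:2302.04401 — 5 statements merged into one kernel-verified Lean document; each statement's English description precedes it below -/
import Mathlib

section
/- Let T be a positive-definite diagonal matrix and K symmetric positive definite, and let Σ_ss be the unique solution of KΣ + ΣK = 2k_B T. Then Σ_ss = k_B T K^{−1} (equivalently, the probability current vanishes: −γ^{−1}K + γ^{−1}k_B T Σ_ss^{−1} = 0) if and only if K and T commute. -/
open Matrix
open scoped ComplexOrder

/-!
If `Σ = k_B T K⁻¹` solves `KΣ + ΣK = 2k_B T`, the equation reads `k_B (K T K⁻¹ + T) = 2k_B T`,
i.e. `K T K⁻¹ = T`. Conversely, if `K` and `T` commute then `k_B T K⁻¹` is a solution, and it is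
the only one: if `KD + DK = 0` then `D` maps every `λ`-eigenvector of `K` to a `(-λ)`-eigenvector,
which vanishes because `K` is positive definite, so `D` kills an eigenbasis. The current then
vanishes since `T Σ⁻¹ = k_B⁻¹ T K T⁻¹ = k_B⁻¹ K`.
-/

namespace Matrix

variable {n 𝕜 R : Type*} [Fintype n]

section RCLike

variable [RCLike 𝕜] {K : Matrix n n 𝕜}

theorem PosDef.eq_zero_of_mulVec_eq_neg_smul (hK : K.PosDef) {c : ℝ} (hc : 0 ≤ c)
    {w : n → 𝕜} (hw : K *ᵥ w = -c • w) : w = 0 := by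
  by_contra hw0
  have hpos := hK.dotProduct_mulVec_pos hw0
  rw [hw, dotProduct_smul] at hpos
  exact hpos.not_ge (smul_nonpos_of_nonpos_of_nonneg (neg_nonpos.mpr hc)
    (dotProduct_star_self_nonneg w))

theorem PosDef.eq_zero_of_mul_eq_neg_mul (hK : K.PosDef) {D : Matrix n n 𝕜}
    (h : K * D = -(D * K)) : D = 0 := by
  classical
  set b := hK.isHermitian.eigenvectorBasis
  have hb : ∀ j, D *ᵥ b j = 0 := fun j ↦ by
    refine hK.eq_zero_of_mulVec_eq_neg_smul (hK.eigenvalues_pos j).le ?_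
    rw [mulVec_mulVec, h, neg_mulVec, ← mulVec_mulVec,
      hK.isHermitian.mulVec_eigenvectorBasis, mulVec_smul, neg_smul]
  apply toEuclideanLin.injective
  exact b.toBasis.ext fun j ↦ by simp [toLpLin_apply, hb]

theorem PosDef.lyapunov_injective (hK : K.PosDef) {X Y : Matrix n n 𝕜}
    (h : K * X + X * K = K * Y + Y * K) : X = Y := by
  refine sub_eq_zero.mp (hK.eq_zero_of_mul_eq_neg_mul ?_)
  rw [mul_sub, sub_mul, neg_sub, sub_eq_sub_iff_add_eq_add, h, add_comm]

end RCLike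

variable [DecidableEq n] [Field R] {K T : Matrix n n R}

theorem lyapunov_smul_mul_inv_iff_commute (hK : IsUnit K.det) {c : R} (hc : c ≠ 0) :
    K * (c • (T * K⁻¹)) + c • (T * K⁻¹) * K = (2 * c) • T ↔ Commute K T := by
  have := invertibleOfIsUnitDet K hK
  rw [Matrix.mul_smul, Matrix.smul_mul, nonsing_inv_mul_cancel_right _ _ hK, two_mul, add_smul,
    add_left_inj, smul_right_inj hc, ← Matrix.mul_assoc, mul_inv_eq_iff_eq_mul_of_invertible]
  rfl

theorem mul_inv_smul_mul_inv_of_commute (hK : IsUnit K.det) (hT : IsUnit T.det) {c : R}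
    (hc : c ≠ 0) (h : Commute K T) : T * (c • (T * K⁻¹))⁻¹ = c⁻¹ • K := by
  have hinv : (c • (T * K⁻¹))⁻¹ = c⁻¹ • (K * T⁻¹) := by
    refine inv_eq_right_inv ?_
    rw [Matrix.smul_mul, Matrix.mul_smul, smul_smul, mul_inv_cancel₀ hc, one_smul,
      Matrix.mul_assoc, nonsing_inv_mul_cancel_left _ _ hK, mul_nonsing_inv _ hT]
  rw [hinv, Matrix.mul_smul, ← Matrix.mul_assoc, ← h.eq, mul_nonsing_inv_cancel_right _ _ hT]

end Matrix

theorem detailed_balance_iff_commute_general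
    (n : ℕ) (kB γ : ℝ) (hkB : 0 < kB)
    (d : Fin n → ℝ) (hd : ∀ i, 0 < d i)
    (T : Matrix (Fin n) (Fin n) ℝ) (hT : T = Matrix.diagonal d)
    (K : Matrix (Fin n) (Fin n) ℝ) (hKpd : K.PosDef)
    (Sss : Matrix (Fin n) (Fin n) ℝ)
    (hSss : K * Sss + Sss * K = (2 * kB) • T) :
    (Sss = kB • (T * K⁻¹) ∧ -(γ⁻¹ • K) + (γ⁻¹ * kB) • (T * Sss⁻¹) = 0)
      ↔ K * T = T * K := by
  have hKdet : IsUnit K.det := (isUnit_iff_isUnit_det K).mp hKpd.isUnit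
  have hTdet : IsUnit T.det := by
    rw [hT, det_diagonal]
    exact (Finset.prod_pos fun i _ ↦ hd i).ne'.isUnit
  have hsolution := lyapunov_smul_mul_inv_iff_commute (T := T) hKdet hkB.ne'
  constructor
  · rintro ⟨rfl, -⟩
    exact hsolution.mp hSss
  · intro hcomm
    have hS : Sss = kB • (T * K⁻¹) :=
      hKpd.lyapunov_injective (hSss.trans (hsolution.mpr hcomm).symm)
    refine ⟨hS, ?_⟩
    rw [hS, mul_inv_smul_mul_inv_of_commute hKdet hTdet hkB.ne' hcomm, smul_smul, mul_assoc,
      mul_inv_cancel₀ hkB.ne', mul_one, neg_add_cancel]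

/-- For the unique steady-state solution `Σ_ss` of `KΣ + ΣK = 2k_B T`, detailed
balance (`Σ_ss = k_B T K⁻¹`, equivalently a vanishing probability current
`−γ⁻¹K + γ⁻¹ k_B T Σ_ss⁻¹ = 0`) holds if and only if `K` and `T` commute. -/
theorem detailed_balance_iff_commute
    (n : ℕ) (kB γ : ℝ) (hkB : 0 < kB) (hγ : 0 < γ)
    (d : Fin n → ℝ) (hd : ∀ i, 0 < d i)
    (T : Matrix (Fin n) (Fin n) ℝ) (hT : T = Matrix.diagonal d)
    (K : Matrix (Fin n) (Fin n) ℝ) (hK : K.IsSymm) (hKpd : K.PosDef)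
    (Sss : Matrix (Fin n) (Fin n) ℝ)
    (hSss : K * Sss + Sss * K = (2 * kB) • T) :
    (Sss = kB • (T * K⁻¹) ∧ -(γ⁻¹ • K) + (γ⁻¹ * kB) • (T * Sss⁻¹) = 0)
      ↔ K * T = T * K :=
  detailed_balance_iff_commute_general n kB γ hkB d hd T hT K hKpd Sss hSss
end

section
/- Let T be diagonal positive definite and Σ symmetric positive definite. The equation T^{−1}KΣ + ΣKT^{−1} = 2k_B·Id in the symmetric unknown K has the unique solution K = 2k_B ∫₀^∞ e^{−τTΣ} T² e^{−τΣT} dτ, and this K is symmetric. -/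
/-! Conjugating by `P = T^{1/2}` turns `TΣ` and `ΣT` into the symmetric positive definite matrix
`A = PΣP`, the integrand into `P e^{-τA} T e^{-τA} P`, and the equation into the Lyapunov equation
`XA + AX = 2k_B T` for `X = P⁻¹KP⁻¹`. In an orthonormal eigenbasis of `A`, with eigenvalues
`λₖ > 0`, a Lyapunov equation `XA + AX = C` reads `(λₖ + λₗ) Xₖₗ = Cₖₗ`: its unique solution is
`Xₖₗ = Cₖₗ / (λₖ + λₗ) = ∫₀^∞ e^{-(λₖ+λₗ)τ} Cₖₗ dτ`. Transposing the equation for `K` gives the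
same equation, so `K` is symmetric by uniqueness. -/

open Matrix MeasureTheory Set

lemma Real.integral_exp_neg_mul_Ioi {a : ℝ} (ha : 0 < a) :
    ∫ τ in Ioi (0:ℝ), Real.exp (-a * τ) = a⁻¹ := by
  have h := integral_comp_mul_left_Ioi (fun x => Real.exp (-x)) 0 ha
  simpa only [mul_zero, integral_exp_neg_Ioi, smul_eq_mul, neg_zero, Real.exp_zero, mul_one,
    neg_mul] using h

namespace Matrix

section EntrywiseIntegral

variable {m n p q α : Type*} [Fintype n] [Fintype p] [MeasurableSpace α] {μ : Measure α}
  {F : α → Matrix n p ℝ}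

lemma integrable_mul_mul_apply (hF : ∀ k l, Integrable (fun x => F x k l) μ)
    (U : Matrix m n ℝ) (V : Matrix p q ℝ) (i : m) (j : q) :
    Integrable (fun x => (U * F x * V) i j) μ := by
  simp only [mul_apply, Finset.sum_mul]
  exact integrable_finsetSum _ fun l _ => integrable_finsetSum _ fun k _ =>
    ((hF k l).const_mul _).mul_const _

lemma integral_mul_mul_apply (hF : ∀ k l, Integrable (fun x => F x k l) μ)
    (U : Matrix m n ℝ) (V : Matrix p q ℝ) (i : m) (j : q) :
    ∫ x, (U * F x * V) i j ∂μ = (U * of (fun k l => ∫ x, F x k l ∂μ) * V) i j := by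
  simp only [mul_apply, of_apply, Finset.sum_mul]
  rw [integral_finsetSum _ fun l _ => integrable_finsetSum _ fun k _ =>
    ((hF k l).const_mul _).mul_const _]
  refine Finset.sum_congr rfl fun l _ => ?_
  rw [integral_finsetSum _ fun k _ => ((hF k l).const_mul _).mul_const _]
  refine Finset.sum_congr rfl fun k _ => ?_
  rw [integral_mul_const, integral_const_mul]

end EntrywiseIntegral

variable {ι : Type*} [Fintype ι] [DecidableEq ι]

lemma exp_unitary_conj {𝕜 : Type*} [RCLike 𝕜] (U : unitaryGroup ι 𝕜) (B : Matrix ι ι 𝕜) :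
    NormedSpace.exp ((U : Matrix ι ι 𝕜) * B * star (U : Matrix ι ι 𝕜)) =
      U * NormedSpace.exp B * star (U : Matrix ι ι 𝕜) := by
  have hinv : (U : Matrix ι ι 𝕜)⁻¹ = star (U : Matrix ι ι 𝕜) :=
    inv_eq_right_inv (Unitary.mul_star_self_of_mem U.2)
  rw [← hinv, exp_conj _ _ Unitary.isUnit_coe]

lemma mul_diagonal_add_diagonal_mul_apply {R : Type*} [CommRing R] (Z : Matrix ι ι R)
    (v : ι → R) (k l : ι) :
    (Z * diagonal v + diagonal v * Z) k l = (v k + v l) * Z k l := by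
  simp only [add_apply, mul_diagonal, diagonal_mul]
  ring

lemma inv_mul_mul_inv_eq_iff {R : Type*} [CommRing R]
    {P : Matrix ι ι R} (hP : IsUnit P.det) {K X : Matrix ι ι R} :
    P⁻¹ * K * P⁻¹ = X ↔ K = P * X * P := by
  constructor
  · rintro rfl
    simp only [mul_assoc, mul_nonsing_inv_cancel_left _ _ hP, nonsing_inv_mul _ hP,
      mul_one]
  · rintro rfl
    simp only [mul_assoc, nonsing_inv_mul_cancel_left _ _ hP, mul_nonsing_inv _ hP,
      mul_one]

/-- The solution of `X * A + A * X = C` for `A = U * diagonal v * star U`. -/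
noncomputable def lyapunovSolution (U : Matrix ι ι ℝ) (v : ι → ℝ) (C : Matrix ι ι ℝ) :
    Matrix ι ι ℝ :=
  U * of (fun k l => (star U * C * U) k l / (v k + v l)) * star U

lemma lyapunovSolution_smul (U : Matrix ι ι ℝ) (v : ι → ℝ) (c : ℝ) (C : Matrix ι ι ℝ) :
    lyapunovSolution U v (c • C) = c • lyapunovSolution U v C := by
  have h : of (fun k l => (star U * (c • C) * U) k l / (v k + v l)) =
      c • of (fun k l => (star U * C * U) k l / (v k + v l)) := by
    ext k l
    simp [mul_div_assoc]
  rw [lyapunovSolution, lyapunovSolution, h, Matrix.mul_smul, Matrix.smul_mul]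

lemma mul_add_mul_eq_iff_eq_lyapunovSolution {U : Matrix ι ι ℝ} (hU : U ∈ unitaryGroup ι ℝ)
    {v : ι → ℝ} (hv : ∀ k l, v k + v l ≠ 0) {X C : Matrix ι ι ℝ} :
    X * (U * diagonal v * star U) + U * diagonal v * star U * X = C ↔
      X = lyapunovSolution U v C := by
  have hU₁ : U * star U = 1 := mem_unitaryGroup_iff.mp hU
  have hU₂ : star U * U = 1 := mem_unitaryGroup_iff'.mp hU
  have conj_inj : ∀ M N : Matrix ι ι ℝ, star U * M * U = star U * N * U ↔ M = N := by
    have recover : ∀ M : Matrix ι ι ℝ, U * (star U * M * U) * star U = M := fun M => by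
      simp only [← mul_assoc, hU₁, one_mul]
      simp only [mul_assoc, hU₁, mul_one]
    exact fun M N => ⟨fun h => by rw [← recover M, h, recover], fun h => h ▸ rfl⟩
  set Y := star U * X * U
  calc _ ↔ Y * diagonal v + diagonal v * Y = star U * C * U := by
        rw [← conj_inj]
        simp only [Y, Matrix.mul_add, Matrix.add_mul, ← mul_assoc, hU₂, one_mul]
        simp only [mul_assoc, hU₂, mul_one]
    _ ↔ Y = of (fun k l => (star U * C * U) k l / (v k + v l)) := by
        simp only [← Matrix.ext_iff, mul_diagonal_add_diagonal_mul_apply, of_apply,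
          eq_div_iff (hv _ _), mul_comm]
    _ ↔ X = lyapunovSolution U v C := by
        conv_rhs => rw [lyapunovSolution, ← conj_inj]
        simp only [← mul_assoc, hU₂, one_mul]
        simp only [Y, mul_assoc, hU₂, mul_one]

namespace IsHermitian

variable {A : Matrix ι ι ℝ} (hA : A.IsHermitian)

lemma eq_eigenvectorUnitary_mul_diagonal_mul_star :
    A = (hA.eigenvectorUnitary : Matrix ι ι ℝ) * diagonal hA.eigenvalues *
      star (hA.eigenvectorUnitary : Matrix ι ι ℝ) := by
  conv_lhs => rw [hA.spectral_theorem]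
  simp [Unitary.conjStarAlgAut_apply]

lemma exp_neg_smul (τ : ℝ) :
    NormedSpace.exp (-(τ • A)) = (hA.eigenvectorUnitary : Matrix ι ι ℝ) *
      diagonal (fun k => Real.exp (-τ * hA.eigenvalues k)) *
        star (hA.eigenvectorUnitary : Matrix ι ι ℝ) := by
  have h : -(τ • A) = (hA.eigenvectorUnitary : Matrix ι ι ℝ) *
      diagonal (fun k => -τ * hA.eigenvalues k) * star (hA.eigenvectorUnitary : Matrix ι ι ℝ) := by
    have : diagonal (fun k => -τ * hA.eigenvalues k) = -(τ • diagonal hA.eigenvalues) := by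
      rw [← diagonal_smul, diagonal_neg]
      simp only [Pi.smul_apply, smul_eq_mul, neg_mul]
    conv_lhs => rw [hA.eq_eigenvectorUnitary_mul_diagonal_mul_star]
    rw [this, Matrix.mul_neg, Matrix.neg_mul, Matrix.mul_smul, Matrix.smul_mul]
  rw [h, exp_unitary_conj, exp_diagonal, Pi.exp_def, Real.exp_eq_exp_ℝ]

lemma exp_neg_smul_mul_mul_exp_neg_smul (C : Matrix ι ι ℝ) (τ : ℝ) :
    NormedSpace.exp (-(τ • A)) * C * NormedSpace.exp (-(τ • A)) =
      (hA.eigenvectorUnitary : Matrix ι ι ℝ) *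
        of (fun k l => Real.exp (-(hA.eigenvalues k + hA.eigenvalues l) * τ) *
          (star (hA.eigenvectorUnitary : Matrix ι ι ℝ) * C * hA.eigenvectorUnitary) k l) *
        star (hA.eigenvectorUnitary : Matrix ι ι ℝ) := by
  have hdiag : ∀ M : Matrix ι ι ℝ,
      diagonal (fun k => Real.exp (-τ * hA.eigenvalues k)) * M *
        diagonal (fun k => Real.exp (-τ * hA.eigenvalues k)) =
      of (fun k l => Real.exp (-(hA.eigenvalues k + hA.eigenvalues l) * τ) * M k l) := by
    intro M
    ext k l
    simp only [mul_diagonal, diagonal_mul, of_apply]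
    rw [show -(hA.eigenvalues k + hA.eigenvalues l) * τ =
      -τ * hA.eigenvalues k + -τ * hA.eigenvalues l by ring, Real.exp_add]
    ring
  rw [hA.exp_neg_smul, ← hdiag]
  simp only [mul_assoc]

lemma mul_add_mul_eq_iff (hv : ∀ k l, hA.eigenvalues k + hA.eigenvalues l ≠ 0)
    {X C : Matrix ι ι ℝ} :
    X * A + A * X = C ↔
      X = lyapunovSolution hA.eigenvectorUnitary hA.eigenvalues C := by
  conv_lhs => rw [hA.eq_eigenvectorUnitary_mul_diagonal_mul_star]
  exact mul_add_mul_eq_iff_eq_lyapunovSolution hA.eigenvectorUnitary.2 hv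

end IsHermitian

namespace PosDef

variable {A : Matrix ι ι ℝ}

lemma integrableOn_exp_neg_smul_mul_mul_exp_neg_smul_apply (hA : A.PosDef) (C : Matrix ι ι ℝ)
    (i j : ι) :
    IntegrableOn (fun τ : ℝ => (NormedSpace.exp (-(τ • A)) * C * NormedSpace.exp (-(τ • A))) i j)
      (Ioi (0 : ℝ)) := by
  simp_rw [hA.isHermitian.exp_neg_smul_mul_mul_exp_neg_smul]
  refine integrable_mul_mul_apply (fun k l => ?_) _ _ i j
  exact (exp_neg_integrableOn_Ioi 0
    (add_pos (hA.eigenvalues_pos k) (hA.eigenvalues_pos l))).mul_const _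

lemma integral_exp_neg_smul_mul_mul_exp_neg_smul_apply (hA : A.PosDef) (C : Matrix ι ι ℝ)
    (i j : ι) :
    ∫ τ in Ioi (0 : ℝ), (NormedSpace.exp (-(τ • A)) * C * NormedSpace.exp (-(τ • A))) i j =
      lyapunovSolution hA.isHermitian.eigenvectorUnitary hA.isHermitian.eigenvalues C i j := by
  simp_rw [hA.isHermitian.exp_neg_smul_mul_mul_exp_neg_smul]
  rw [integral_mul_mul_apply fun k l => ?_]
  · simp only [of_apply, integral_mul_const, Real.integral_exp_neg_mul_Ioi
      (add_pos (hA.eigenvalues_pos _) (hA.eigenvalues_pos _)), inv_mul_eq_div, lyapunovSolution]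
  · exact (exp_neg_integrableOn_Ioi 0
      (add_pos (hA.eigenvalues_pos k) (hA.eigenvalues_pos l))).mul_const _

lemma mul_add_mul_eq_iff (hA : A.PosDef) {X C : Matrix ι ι ℝ} :
    X * A + A * X = C ↔
      X = lyapunovSolution hA.isHermitian.eigenvectorUnitary hA.isHermitian.eigenvalues C :=
  hA.isHermitian.mul_add_mul_eq_iff fun k l =>
    (add_pos (hA.eigenvalues_pos k) (hA.eigenvalues_pos l)).ne'

end PosDef

lemma exists_mul_self_eq_diagonal {d : ι → ℝ} (hd : ∀ i, 0 < d i) :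
    ∃ P : Matrix ι ι ℝ, P * P = diagonal d ∧ Pᴴ = P ∧ IsUnit P.det := by
  refine ⟨diagonal fun i => √(d i), ?_, by simp, ?_⟩
  · rw [diagonal_mul_diagonal]
    exact congrArg diagonal (funext fun i => Real.mul_self_sqrt (hd i).le)
  · rw [det_diagonal, isUnit_iff_ne_zero]
    exact Finset.prod_ne_zero_iff.mpr fun i _ => (Real.sqrt_pos.mpr (hd i)).ne'

section SquareRootConjugation

variable {P T : Matrix ι ι ℝ}

lemma exp_neg_smul_mul_sq_mul_exp_neg_smul (hP : IsUnit P.det) (hPT : P * P = T)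
    (S : Matrix ι ι ℝ) (τ : ℝ) :
    NormedSpace.exp (-(τ • (T * S))) * (T * T) * NormedSpace.exp (-(τ • (S * T))) =
      P * (NormedSpace.exp (-(τ • (P * S * P))) * T *
        NormedSpace.exp (-(τ • (P * S * P)))) * P := by
  have hPu : IsUnit P := (isUnit_iff_isUnit_det P).mpr hP
  have hTS : T * S = P * (P * S * P) * P⁻¹ := by
    simp only [← hPT, mul_assoc, mul_nonsing_inv _ hP, mul_one]
  have hST : S * T = P⁻¹ * (P * S * P) * P := by
    simp only [← hPT, mul_assoc, nonsing_inv_mul_cancel_left _ _ hP]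
  have neg_smul_conj : ∀ Q R B : Matrix ι ι ℝ, -(τ • (Q * B * R)) = Q * -(τ • B) * R := by
    intro Q R B
    rw [Matrix.mul_neg, Matrix.neg_mul, Matrix.mul_smul, Matrix.smul_mul]
  rw [hTS, hST, neg_smul_conj P P⁻¹, neg_smul_conj P⁻¹ P, exp_conj _ _ hPu, exp_conj' _ _ hPu,
    ← hPT]
  simp only [mul_assoc, nonsing_inv_mul_cancel_left _ _ hP, mul_nonsing_inv_cancel_left _ _ hP]

lemma inv_mul_mul_add_mul_mul_inv_eq_smul_one_iff (hP : IsUnit P.det) (hPT : P * P = T)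
    (S K : Matrix ι ι ℝ) (c : ℝ) :
    T⁻¹ * K * S + S * K * T⁻¹ = c • 1 ↔
      P⁻¹ * K * P⁻¹ * (P * S * P) + P * S * P * (P⁻¹ * K * P⁻¹) = c • T := by
  have hY : T⁻¹ * K * S + S * K * T⁻¹ =
      P⁻¹ * (P⁻¹ * K * P⁻¹ * (P * S * P) + P * S * P * (P⁻¹ * K * P⁻¹)) * P⁻¹ := by
    simp only [← hPT, Matrix.mul_inv_rev, Matrix.mul_add, Matrix.add_mul, mul_assoc,
      mul_nonsing_inv_cancel_left _ _ hP, nonsing_inv_mul_cancel_left _ _ hP,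
      mul_nonsing_inv _ hP, mul_one]
  rw [hY, inv_mul_mul_inv_eq_iff hP, Matrix.mul_smul, Matrix.mul_one, Matrix.smul_mul, hPT]

end SquareRootConjugation

end Matrix

theorem min_entropy_rate_gain_general
    (n : ℕ) (kB : ℝ)
    (d : Fin n → ℝ) (hd : ∀ i, 0 < d i)
    (T : Matrix (Fin n) (Fin n) ℝ) (hT : T = Matrix.diagonal d)
    (S : Matrix (Fin n) (Fin n) ℝ) (hSpd : S.PosDef)
    (K : Matrix (Fin n) (Fin n) ℝ)
    (hK : ∀ i j, K i j = 2 * kB *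
      ∫ τ in Set.Ioi (0:ℝ),
        (NormedSpace.exp (-(τ • (T * S))) * (T * T) *
          NormedSpace.exp (-(τ • (S * T)))) i j) :
    Kᵀ = K ∧ T⁻¹ * K * S + S * K * T⁻¹ = (2 * kB) • (1 : Matrix (Fin n) (Fin n) ℝ) ∧
      ∀ K' : Matrix (Fin n) (Fin n) ℝ, K'ᵀ = K' →
        T⁻¹ * K' * S + S * K' * T⁻¹ = (2 * kB) • (1 : Matrix (Fin n) (Fin n) ℝ) →
        K' = K := by
  obtain ⟨P, hPT, hPh, hP⟩ := exists_mul_self_eq_diagonal hd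
  rw [← hT] at hPT
  have hA : (P * S * P).PosDef := by
    simpa only [hPh] using hSpd.conjTranspose_mul_mul_same
      (mulVec_injective_of_isUnit ((isUnit_iff_isUnit_det P).mpr hP))
  have hKX : K = P * lyapunovSolution hA.isHermitian.eigenvectorUnitary
      hA.isHermitian.eigenvalues ((2 * kB) • T) * P := by
    ext i j
    rw [hK, lyapunovSolution_smul, Matrix.mul_smul, Matrix.smul_mul, Matrix.smul_apply, smul_eq_mul]
    simp_rw [exp_neg_smul_mul_sq_mul_exp_neg_smul hP hPT,
      integral_mul_mul_apply (hA.integrableOn_exp_neg_smul_mul_mul_exp_neg_smul_apply T),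
      hA.integral_exp_neg_smul_mul_mul_exp_neg_smul_apply]
    rfl
  have hsolve : ∀ K', T⁻¹ * K' * S + S * K' * T⁻¹ = (2 * kB) • 1 ↔ K' = K := fun K' => by
    rw [inv_mul_mul_add_mul_mul_inv_eq_smul_one_iff hP hPT, hA.mul_add_mul_eq_iff,
      inv_mul_mul_inv_eq_iff hP, hKX]
  have hSt : Sᵀ = S := by simpa using hSpd.isHermitian.eq
  have hTt : Tᵀ = T := by rw [hT, diagonal_transpose]
  have hsol := (hsolve K).mpr rfl
  refine ⟨(hsolve Kᵀ).mp ?_, hsol, fun K' _ => (hsolve K').mp⟩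
  simpa [transpose_mul, transpose_nonsing_inv, hTt, hSt, mul_assoc, add_comm] using
    congrArg transpose hsol

/-- The equation `T⁻¹KΣ + ΣKT⁻¹ = 2k_B·Id` in the symmetric unknown `K` has the
unique solution `K = 2k_B ∫₀^∞ e^{−τTΣ} T² e^{−τΣT} dτ`, and this `K` is symmetric. -/
theorem min_entropy_rate_gain
    (n : ℕ) (kB : ℝ) (hkB : 0 < kB)
    (d : Fin n → ℝ) (hd : ∀ i, 0 < d i)
    (T : Matrix (Fin n) (Fin n) ℝ) (hT : T = Matrix.diagonal d)
    (S : Matrix (Fin n) (Fin n) ℝ) (hS : Sᵀ = S) (hSpd : S.PosDef)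
    (K : Matrix (Fin n) (Fin n) ℝ)
    (hK : ∀ i j, K i j = 2 * kB *
      ∫ τ in Set.Ioi (0:ℝ),
        (NormedSpace.exp (-(τ • (T * S))) * (T * T) *
          NormedSpace.exp (-(τ • (S * T)))) i j) :
    Kᵀ = K ∧ T⁻¹ * K * S + S * K * T⁻¹ = (2 * kB) • (1 : Matrix (Fin n) (Fin n) ℝ) ∧
      ∀ K' : Matrix (Fin n) (Fin n) ℝ, K'ᵀ = K' →
        T⁻¹ * K' * S + S * K' * T⁻¹ = (2 * kB) • (1 : Matrix (Fin n) (Fin n) ℝ) →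
        K' = K :=
  min_entropy_rate_gain_general n kB d hd T hT S hSpd K hK
end

section
/- Let Σ₀, Σ_f be symmetric positive-definite n×n matrices and M symmetric positive definite. Define A = Σ_f^{1/2}(Σ_f^{1/2} M Σ₀ M Σ_f^{1/2})^{−1/2} Σ_f^{1/2} M and Σ(t) = ((1 − t/t_f)Id + (t/t_f)A) Σ₀ ((1 − t/t_f)Id + (t/t_f)A)ᵀ for t ∈ [0, t_f]. Then Σ(0) = Σ₀ and Σ(t_f) = Σ_f. -/
open Matrix

/-- The displacement interpolation of covariances
`Σ(t) = ((1 − t/t_f)Id + (t/t_f)A) Σ₀ ((1 − t/t_f)Id + (t/t_f)A)ᵀ` with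
`A = Σ_f^{1/2}(Σ_f^{1/2} M Σ₀ M Σ_f^{1/2})^{−1/2} Σ_f^{1/2} M`
satisfies the end-point conditions `Σ(0) = Σ₀` and `Σ(t_f) = Σ_f`. -/
theorem displacement_interpolation_endpoints
    (n : ℕ) (tf : ℝ) (htf : 0 < tf)
    (M Sig0 Sigf Sf R A : Matrix (Fin n) (Fin n) ℝ)
    (hM : M.PosDef) (h0 : Sig0.PosDef) (hf : Sigf.PosDef)
    (hSf : Sf.PosDef) (hSfsymm : Sfᵀ = Sf) (hSfsq : Sf * Sf = Sigf)
    (hR : R.PosDef) (hRsymm : Rᵀ = R) (hRsq : R * R = Sf * M * Sig0 * M * Sf)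
    (hA : A = Sf * R⁻¹ * Sf * M)
    (Sig : ℝ → Matrix (Fin n) (Fin n) ℝ)
    (hSig : ∀ t, Sig t =
      ((1 - t / tf) • (1 : Matrix (Fin n) (Fin n) ℝ) + (t / tf) • A) * Sig0 *
      ((1 - t / tf) • (1 : Matrix (Fin n) (Fin n) ℝ) + (t / tf) • A)ᵀ) :
    Sig 0 = Sig0 ∧ Sig tf = Sigf := by
  have hMsymm : Mᵀ = M := hM.isHermitian.eq
  have hRdet : IsUnit R.det := isUnit_iff_ne_zero.mpr hR.det_pos.ne'
  have hRinv : R⁻¹ * R = 1 := Matrix.nonsing_inv_mul R hRdet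
  have hRinvT : (R⁻¹)ᵀ = R⁻¹ := by rw [Matrix.transpose_nonsing_inv, hRsymm]
  constructor
  · rw [hSig 0]
    simp
  · rw [hSig tf]
    rw [div_self htf.ne']
    simp only [sub_self, zero_smul, one_smul, zero_add]
    have hAT : Aᵀ = M * Sf * R⁻¹ * Sf := by
      rw [hA]
      simp [Matrix.transpose_mul, hMsymm, hSfsymm, hRinvT, Matrix.mul_assoc]
    rw [hAT, hA]
    have key : Sf * R⁻¹ * Sf * M * Sig0 * (M * Sf * R⁻¹ * Sf)
        = Sf * R⁻¹ * (R * R) * R⁻¹ * Sf := by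
      rw [hRsq]; simp only [Matrix.mul_assoc]
    calc Sf * R⁻¹ * Sf * M * Sig0 * (M * Sf * R⁻¹ * Sf)
        = Sf * R⁻¹ * (R * R) * R⁻¹ * Sf := key
      _ = Sf * ((R⁻¹ * R) * (R * R⁻¹)) * Sf := by simp only [Matrix.mul_assoc]
      _ = Sigf := by
          rw [hRinv, Matrix.mul_nonsing_inv R hRdet]
          simp [hSfsq]
end

section
/- Let τ > 0, r > 0, θ ∈ ℝ, and consider the quadratic function of (ṙ, θ̇): f(ṙ,θ̇) = cosh(r)ṙ² + sinh(r)tanh(r)θ̇² + (Δ²/cosh(r))·((ṙ + τ^{−1}sinh(r))sin θ + θ̇ tanh(r)cos θ)²/(T̄ + Δ tanh(r)cos θ)², where T̄ > Δ > 0. Then f is a strictly convex quadratic in (ṙ,θ̇) (its Hessian, the matrix A in the text, is positive definite), and therefore has a unique global minimizer given by ṙ = −τ^{−1}h(r,θ) sinh(r) sin θ and θ̇ = −τ^{−1}h(r,θ) cosh(r) cos θ, with h(r,θ) = tanh(r)² sin θ / ((T̄/Δ + cos θ tanh r)² sinh(r)² + tanh(r)²). -/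
/-!
Writing `c = cosh r`, `t = tanh r` and `D = T̄ + Δ t cos θ`, the rate is
`c ṙ² + sinh r · t θ̇² + M (sin θ · ṙ + t cos θ · θ̇ + τ⁻¹ sinh r sin θ)²` with `M = Δ² / (c D²) ≥ 0`.
Its Hessian `2 (diag(c, sinh r · t) + M (sin θ, t cos θ)(sin θ, t cos θ)ᵀ)` is positive definite as
`r > 0`, so the rate is strictly convex and equals its value at the stationary point plus the
quadratic part evaluated at the displacement. Since `sin² θ + cos² θ = 1`, the stationarity equations collapse
to the single scalar equation `h (c + M) = M sin θ`, which is the defining formula of `h`.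
-/

open Real

/-- The quadratic with Hessian `2 (diag(α, β) + M (u, v)(u, v)ᵀ)`. -/
def diagRankOneQuad (α β M u v w a b : ℝ) : ℝ :=
  α * a ^ 2 + β * b ^ 2 + M * (u * a + v * b + w) ^ 2

namespace diagRankOneQuad

variable {α β M : ℝ} (u v w : ℝ)

lemma nonneg (hα : 0 ≤ α) (hβ : 0 ≤ β) (hM : 0 ≤ M) (a b : ℝ) :
    0 ≤ diagRankOneQuad α β M u v w a b := by
  unfold diagRankOneQuad
  positivity

lemma pos (hα : 0 < α) (hβ : 0 < β) (hM : 0 ≤ M) {a b : ℝ} (hab : (a, b) ≠ 0) :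
    0 < diagRankOneQuad α β M u v w a b := by
  unfold diagRankOneQuad
  have hsum : 0 < α * a ^ 2 + β * b ^ 2 := by
    rcases eq_or_ne a 0 with rfl | ha
    · have hb : b ≠ 0 := fun hb => hab (by simp [hb])
      positivity
    · positivity
  positivity

lemma convex_combination_gap {s t : ℝ} (hst : s + t = 1) (a b a' b' : ℝ) :
    s * diagRankOneQuad α β M u v w a b + t * diagRankOneQuad α β M u v w a' b' -
        diagRankOneQuad α β M u v w (s * a + t * a') (s * b + t * b') =
      s * t * diagRankOneQuad α β M u v 0 (a - a') (b - b') := by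
  obtain rfl : t = 1 - s := by linarith
  unfold diagRankOneQuad
  ring

lemma strictConvexOn (hα : 0 < α) (hβ : 0 < β) (hM : 0 ≤ M) :
    StrictConvexOn ℝ Set.univ fun p : ℝ × ℝ => diagRankOneQuad α β M u v w p.1 p.2 := by
  refine ⟨convex_univ, fun p _ q _ hpq s t hs ht hst => ?_⟩
  have hgap := convex_combination_gap (α := α) (β := β) (M := M) u v w hst p.1 p.2 q.1 q.2
  have hdiff := pos u v 0 hα hβ hM (a := p.1 - q.1) (b := p.2 - q.2) (sub_ne_zero.mpr hpq)
  simp only [Prod.fst_add, Prod.snd_add, Prod.smul_fst, Prod.smul_snd, smul_eq_mul]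
  nlinarith [mul_pos (mul_pos hs ht) hdiff]

lemma eq_add_of_stationary {a₀ b₀ : ℝ}
    (hstat₁ : α * a₀ + M * u * (u * a₀ + v * b₀ + w) = 0)
    (hstat₂ : β * b₀ + M * v * (u * a₀ + v * b₀ + w) = 0) (a b : ℝ) :
    diagRankOneQuad α β M u v w a b =
      diagRankOneQuad α β M u v w a₀ b₀ + diagRankOneQuad α β M u v 0 (a - a₀) (b - b₀) := by
  unfold diagRankOneQuad
  linear_combination (2 * (a - a₀)) * hstat₁ + (2 * (b - b₀)) * hstat₂

lemma isMinOn_of_stationary (hα : 0 ≤ α) (hβ : 0 ≤ β) (hM : 0 ≤ M) {a₀ b₀ : ℝ}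
    (hstat₁ : α * a₀ + M * u * (u * a₀ + v * b₀ + w) = 0)
    (hstat₂ : β * b₀ + M * v * (u * a₀ + v * b₀ + w) = 0) :
    IsMinOn (fun p : ℝ × ℝ => diagRankOneQuad α β M u v w p.1 p.2) Set.univ (a₀, b₀) :=
  fun p _ => by
    change diagRankOneQuad α β M u v w a₀ b₀ ≤ diagRankOneQuad α β M u v w p.1 p.2
    rw [eq_add_of_stationary u v w hstat₁ hstat₂ p.1 p.2]
    exact le_add_of_nonneg_right (nonneg u v 0 hα hβ hM _ _)

end diagRankOneQuad

lemma StrictConvexOn.eq_of_isMinOn_of_apply_eq {E : Type*} [AddCommMonoid E] [Module ℝ E]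
    {s : Set E} {f : E → ℝ} {x y : E} (hf : StrictConvexOn ℝ s f) (hmin : IsMinOn f s x)
    (hx : x ∈ s) (hy : y ∈ s) (hxy : f y = f x) : y = x :=
  hf.eq_of_isMinOn (fun _ hz => hxy.trans_le (hmin hz)) hmin hy hx

lemma tanh_mul_cosh (x : ℝ) : tanh x * cosh x = sinh x := by
  rw [tanh_eq_sinh_div_cosh, div_mul_cancel₀ _ (cosh_pos x).ne']

lemma add_mul_tanh_mul_cos_pos {T Δ : ℝ} (hΔ : 0 ≤ Δ) (hT : Δ < T) (r θ : ℝ) :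
    0 < T + Δ * tanh r * cos θ := by
  have hle : |tanh r * cos θ| ≤ 1 := by
    rw [abs_mul]
    exact mul_le_one₀ (abs_tanh_lt_one r).le (abs_nonneg _) (abs_cos_le_one θ)
  nlinarith [abs_le.mp hle]

theorem entropy_rate_unique_minimizer_2D_general
    (τ Tb Δ r θ : ℝ) (hΔ : 0 < Δ) (hTb : Δ < Tb) (hr : 0 < r)
    (f : ℝ → ℝ → ℝ)
    (hf : ∀ rdot θdot, f rdot θdot =
      Real.cosh r * rdot ^ 2 + Real.sinh r * Real.tanh r * θdot ^ 2 +
        (Δ ^ 2 / Real.cosh r) *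
          ((rdot + τ⁻¹ * Real.sinh r) * Real.sin θ +
              θdot * Real.tanh r * Real.cos θ) ^ 2 /
            (Tb + Δ * Real.tanh r * Real.cos θ) ^ 2)
    (h : ℝ)
    (hh : h = Real.tanh r ^ 2 * Real.sin θ /
      ((Tb / Δ + Real.cos θ * Real.tanh r) ^ 2 * Real.sinh r ^ 2 +
        Real.tanh r ^ 2))
    (rdots θdots : ℝ)
    (hrdots : rdots = -τ⁻¹ * h * Real.sinh r * Real.sin θ)
    (hθdots : θdots = -τ⁻¹ * h * Real.cosh r * Real.cos θ) :
    StrictConvexOn ℝ Set.univ (fun p : ℝ × ℝ => f p.1 p.2) ∧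
    (∀ a b : ℝ, f rdots θdots ≤ f a b) ∧
    (∀ a b : ℝ, f a b = f rdots θdots → a = rdots ∧ b = θdots) := by
  set D := Tb + Δ * tanh r * cos θ
  set M := Δ ^ 2 / cosh r / D ^ 2
  obtain rfl : f = diagRankOneQuad (cosh r) (sinh r * tanh r) M (sin θ) (tanh r * cos θ)
      (τ⁻¹ * sinh r * sin θ) := by
    ext a b
    rw [hf, diagRankOneQuad]
    ring
  have hc := cosh_pos r
  have hS := sinh_pos_iff.mpr hr
  have ht : 0 < tanh r := by rw [tanh_eq_sinh_div_cosh]; positivity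
  have hD : 0 < D := add_mul_tanh_mul_cos_pos hΔ.le hTb r θ
  have htc := tanh_mul_cosh r
  have hh' : h * (cosh r + M) = M * sin θ := by
    rw [hh, show Tb / Δ + cos θ * tanh r = D / Δ by field_simp; ring, ← htc]
    simp only [M]
    field_simp
  have hL : sin θ * rdots + tanh r * cos θ * θdots + τ⁻¹ * sinh r * sin θ =
      τ⁻¹ * sinh r * (sin θ - h) := by
    rw [hrdots, hθdots]
    linear_combination (-τ⁻¹ * h * sinh r) * sin_sq_add_cos_sq θ
      + (-τ⁻¹ * h * cos θ ^ 2) * htc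
  have hmin : IsMinOn (fun p : ℝ × ℝ => diagRankOneQuad (cosh r) (sinh r * tanh r) M (sin θ)
      (tanh r * cos θ) (τ⁻¹ * sinh r * sin θ) p.1 p.2) Set.univ (rdots, θdots) := by
    refine diagRankOneQuad.isMinOn_of_stationary _ _ _ hc.le (by positivity) (by positivity)
      ?_ ?_ <;> rw [hL]
    · rw [hrdots]
      linear_combination (-τ⁻¹ * sinh r * sin θ) * hh'
    · rw [hθdots]
      linear_combination (-τ⁻¹ * sinh r * tanh r * cos θ) * hh'
  have hconv := diagRankOneQuad.strictConvexOn (sin θ) (tanh r * cos θ) (τ⁻¹ * sinh r * sin θ)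
    hc (by positivity : 0 < sinh r * tanh r) (by positivity : 0 ≤ M)
  exact ⟨hconv, fun a b => hmin (Set.mem_univ (a, b)), fun a b hab =>
    Prod.ext_iff.mp (hconv.eq_of_isMinOn_of_apply_eq (y := (a, b)) hmin trivial trivial hab)⟩

/-- The total entropy production rate in the 2D Gaussian case, as a quadratic
function of the velocities `(ṙ, θ̇)`, is strictly convex and has the unique
global minimizer `ṙ = −τ⁻¹ h sinh r sin θ`, `θ̇ = −τ⁻¹ h cosh r cos θ`. -/
theorem entropy_rate_unique_minimizer_2D
    (τ Tb Δ r θ : ℝ) (hτ : 0 < τ) (hΔ : 0 < Δ) (hTb : Δ < Tb) (hr : 0 < r)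
    (f : ℝ → ℝ → ℝ)
    (hf : ∀ rdot θdot, f rdot θdot =
      Real.cosh r * rdot ^ 2 + Real.sinh r * Real.tanh r * θdot ^ 2 +
        (Δ ^ 2 / Real.cosh r) *
          ((rdot + τ⁻¹ * Real.sinh r) * Real.sin θ +
              θdot * Real.tanh r * Real.cos θ) ^ 2 /
            (Tb + Δ * Real.tanh r * Real.cos θ) ^ 2)
    (h : ℝ)
    (hh : h = Real.tanh r ^ 2 * Real.sin θ /
      ((Tb / Δ + Real.cos θ * Real.tanh r) ^ 2 * Real.sinh r ^ 2 +
        Real.tanh r ^ 2))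
    (rdots θdots : ℝ)
    (hrdots : rdots = -τ⁻¹ * h * Real.sinh r * Real.sin θ)
    (hθdots : θdots = -τ⁻¹ * h * Real.cosh r * Real.cos θ) :
    StrictConvexOn ℝ Set.univ (fun p : ℝ × ℝ => f p.1 p.2) ∧
    (∀ a b : ℝ, f rdots θdots ≤ f a b) ∧
    (∀ a b : ℝ, f a b = f rdots θdots → a = rdots ∧ b = θdots) :=
  entropy_rate_unique_minimizer_2D_general τ Tb Δ r θ hΔ hTb hr f hf h hh rdots θdots hrdots hθdots
end

section
/- Let τ̂, t_f > 0 and y₀ ∈ ℝ. Among all C¹ functions ŷ : [0,∞) → ℝ with ŷ(0) = y₀ for which the improper integral J(ŷ) = ∫₀^∞ (ŷ'(t)² + Δ²(ŷ'(t) + τ^{−1}ŷ(t))²) dt converges (Δ > 0, τ̂ = τ√(1+Δ^{−2})), the unique minimizer is ŷ(t) = y₀ e^{−t/τ̂}. -/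
/-! Completing the square with the rate `1/τ̂`, for which `(1 + Δ²)/τ̂² = Δ²/τ²`, gives
`ŷ'² + Δ²(ŷ' + ŷ/τ)² = (1 + Δ²)(ŷ' + ŷ/τ̂)² + c (ŷ²)'` with `c = Δ²/τ − (1 + Δ²)/τ̂`.
Finiteness of `J` puts `ŷ` and `ŷ'` in `L²(0, ∞)`, so `ŷ² → 0` at infinity and the exact
derivative integrates to `−c y₀²`. Hence `J(ŷ) = (1 + Δ²) ∫₀^∞ (ŷ' + ŷ/τ̂)² − c y₀²`, which is
minimal exactly when `ŷ' + ŷ/τ̂ = 0` on `[0, ∞)`, i.e. for `ŷ = y₀ e^{−t/τ̂}`. -/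

open MeasureTheory Set Real

theorem integrable_sq_add_mul_sq_add_iff_memLp {α : Type*} [MeasurableSpace α] {μ : Measure α}
    {f g : α → ℝ} {Δ b : ℝ} (hΔ : Δ ≠ 0) (hb : b ≠ 0)
    (hf : AEStronglyMeasurable f μ) (hg : AEStronglyMeasurable g μ) :
    Integrable (fun x => f x ^ 2 + Δ ^ 2 * (f x + b * g x) ^ 2) μ ↔
      MemLp f 2 μ ∧ MemLp g 2 μ := by
  have hfg : AEStronglyMeasurable (fun x => f x + b * g x) μ := hf.add (hg.const_mul b)
  constructor
  · intro hJ
    have hf2 : MemLp f 2 μ := (memLp_two_iff_integrable_sq hf).2 <|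
      hJ.mono' (hf.pow 2) <| ae_of_all _ fun x => by
        rw [norm_eq_abs, abs_sq]
        linarith [mul_nonneg (sq_nonneg Δ) (sq_nonneg (f x + b * g x))]
    have hfg2 : MemLp (fun x => f x + b * g x) 2 μ := (memLp_two_iff_integrable_sq hfg).2 <|
      (hJ.const_mul (Δ ^ 2)⁻¹).mono' (hfg.pow 2) <| ae_of_all _ fun x => by
        rw [norm_eq_abs, abs_sq, mul_add, ← mul_assoc, inv_mul_cancel₀ (pow_ne_zero 2 hΔ),
          one_mul]
        nlinarith [mul_nonneg (inv_nonneg.2 (sq_nonneg Δ)) (sq_nonneg (f x))]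
    refine ⟨hf2, ?_⟩
    have hg_eq : g = fun x => b⁻¹ * ((f x + b * g x) - f x) := by
      funext x; rw [add_sub_cancel_left, inv_mul_cancel_left₀ hb]
    rw [hg_eq]
    exact (hfg2.sub hf2).const_mul b⁻¹
  · rintro ⟨hf2, hg2⟩
    exact hf2.integrable_sq.add ((hf2.add (hg2.const_mul b)).integrable_sq.const_mul _)

theorem integral_Ioi_mul_deriv_eq {y : ℝ → ℝ} {x₀ : ℝ} (hy : Differentiable ℝ y)
    (hy2 : MemLp y 2 (volume.restrict (Ioi x₀)))
    (hdy2 : MemLp (deriv y) 2 (volume.restrict (Ioi x₀))) :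
    ∫ x in Ioi x₀, y x * deriv y x = -(y x₀ ^ 2 / 2) := by
  have hderiv : ∀ x, HasDerivAt (fun x => y x ^ 2 / 2) (y x * deriv y x) x := fun x =>
    (((hy x).hasDerivAt.pow 2).div_const 2).congr_deriv (by ring)
  have hint : IntegrableOn (fun x => y x * deriv y x) (Ioi x₀) := hy2.integrable_mul hdy2
  have hlim := tendsto_zero_of_hasDerivAt_of_integrableOn_Ioi (fun x _ => hderiv x) hint
    (hy2.integrable_sq.div_const 2)
  rw [integral_Ioi_of_hasDerivAt_of_tendsto' (fun x _ => hderiv x) hint hlim, zero_sub]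

theorem sq_add_mul_sq_add_eq {Δ a b : ℝ} (h : (1 + Δ ^ 2) * a ^ 2 = Δ ^ 2 * b ^ 2) (p q : ℝ) :
    p ^ 2 + Δ ^ 2 * (p + b * q) ^ 2 =
      (1 + Δ ^ 2) * (p + a * q) ^ 2 + 2 * (Δ ^ 2 * b - (1 + Δ ^ 2) * a) * (q * p) := by
  linear_combination (-q ^ 2) * h

theorem integral_Ioi_eq_complete_square {Δ a b x₀ : ℝ} {y : ℝ → ℝ} (hΔ : Δ ≠ 0) (hb : b ≠ 0)
    (hab : (1 + Δ ^ 2) * a ^ 2 = Δ ^ 2 * b ^ 2) (hy : Differentiable ℝ y)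
    (hJ : IntegrableOn (fun x => deriv y x ^ 2 + Δ ^ 2 * (deriv y x + b * y x) ^ 2) (Ioi x₀)) :
    IntegrableOn (fun x => (deriv y x + a * y x) ^ 2) (Ioi x₀) ∧
      ∫ x in Ioi x₀, (deriv y x ^ 2 + Δ ^ 2 * (deriv y x + b * y x) ^ 2) =
        (1 + Δ ^ 2) * (∫ x in Ioi x₀, (deriv y x + a * y x) ^ 2)
          - (Δ ^ 2 * b - (1 + Δ ^ 2) * a) * y x₀ ^ 2 := by
  obtain ⟨hdy2, hy2⟩ := (integrable_sq_add_mul_sq_add_iff_memLp hΔ hb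
    (measurable_deriv y).aestronglyMeasurable hy.continuous.aestronglyMeasurable).1 hJ
  have hres : IntegrableOn (fun x => (deriv y x + a * y x) ^ 2) (Ioi x₀) :=
    (hdy2.add (hy2.const_mul a)).integrable_sq
  refine ⟨hres, ?_⟩
  simp_rw [sq_add_mul_sq_add_eq hab]
  have hyy : IntegrableOn (fun x => y x * deriv y x) (Ioi x₀) := hy2.integrable_mul hdy2
  rw [integral_add (hres.const_mul _) (hyy.const_mul _),
    integral_const_mul, integral_const_mul, integral_Ioi_mul_deriv_eq hy hy2 hdy2]
  ring

theorem eqOn_Ici_zero_of_integral_Ioi_sq_eq_zero {f : ℝ → ℝ} {x₀ : ℝ} (hf : Continuous f)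
    (hint : IntegrableOn (fun x => f x ^ 2) (Ioi x₀)) (h : ∫ x in Ioi x₀, f x ^ 2 = 0) :
    EqOn f 0 (Ici x₀) := by
  have hae : (fun x => f x ^ 2) =ᵐ[volume.restrict (Ici x₀)] 0 := by
    rw [Measure.restrict_congr_set Ioi_ae_eq_Ici.symm]
    exact (integral_eq_zero_iff_of_nonneg (fun x => sq_nonneg _) hint).1 h
  have hsq := Measure.eqOn_of_ae_eq hae (hf.pow 2).continuousOn continuousOn_const
    (by rw [interior_Ici, closure_Ioi])
  exact fun x hx => pow_eq_zero_iff two_ne_zero |>.1 (hsq hx)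

theorem eq_mul_exp_of_deriv_add_mul_eq_zero {y : ℝ → ℝ} {a x₀ : ℝ} (hy : Differentiable ℝ y)
    (hode : ∀ x ≥ x₀, deriv y x + a * y x = 0) :
    ∀ x ≥ x₀, y x = y x₀ * exp (-a * (x - x₀)) := by
  intro x hx
  -- `y · exp (a ·)` has derivative `(y' + a y) exp (a ·)`, which vanishes on `[x₀, ∞)`.
  have hconst := constant_of_has_deriv_right_zero (f := fun s => y s * exp (a * s))
    (hy.continuous.mul (continuous_const.mul continuous_id).rexp).continuousOn (fun s hs => by
      refine (((hy s).hasDerivAt.mul ((hasDerivAt_id' s).const_mul a).exp).congr_deriv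
        ?_).hasDerivWithinAt
      linear_combination exp (a * s) * hode s hs.1) x ⟨hx, le_rfl⟩
  rw [show -a * (x - x₀) = a * x₀ - a * x by ring, exp_sub]
  field_simp
  simpa using hconst

theorem hasDerivAt_const_mul_exp_neg_mul (c a x : ℝ) :
    HasDerivAt (fun x => c * exp (-a * x)) (-a * (c * exp (-a * x))) x :=
  ((((hasDerivAt_id' x).const_mul (-a)).exp).const_mul c).congr_deriv (by ring)

theorem memLp_two_const_mul_exp_neg_mul (c : ℝ) {a : ℝ} (ha : 0 < a) (x₀ : ℝ) :
    MemLp (fun x => c * exp (-a * x)) 2 (volume.restrict (Ioi x₀)) := by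
  refine (memLp_two_iff_integrable_sq (by fun_prop)).2 ?_
  refine ((exp_neg_integrableOn_Ioi x₀ (mul_pos two_pos ha)).const_mul (c ^ 2)).congr
    (ae_of_all _ fun x => ?_)
  dsimp only
  rw [mul_pow, ← exp_nat_mul]
  push_cast
  ring_nf

/-- Infinite-horizon near-equilibrium entropy minimization: among all C¹ functions
with `ŷ(0) = y₀` for which `J(ŷ) = ∫₀^∞ (ŷ'² + Δ²(ŷ' + τ⁻¹ŷ)²) dt` converges, the
unique minimizer is `ŷ(t) = y₀ e^{−t/τ̂}` with `τ̂ = τ√(1 + Δ⁻²)`. -/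
theorem infinite_horizon_unique_minimizer
    (τ Δ y₀ : ℝ) (hτ : 0 < τ) (hΔ : 0 < Δ)
    (τh : ℝ) (hτh : τh = τ * Real.sqrt (1 + Δ⁻¹ ^ 2))
    (ystar : ℝ → ℝ) (hystar : ∀ t, ystar t = y₀ * Real.exp (-(t / τh))) :
    IntegrableOn
      (fun t => (deriv ystar t) ^ 2 + Δ ^ 2 * (deriv ystar t + τ⁻¹ * ystar t) ^ 2)
      (Set.Ioi 0) ∧
    ∀ y : ℝ → ℝ, ContDiff ℝ 1 y → y 0 = y₀ →
      IntegrableOn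
        (fun t => (deriv y t) ^ 2 + Δ ^ 2 * (deriv y t + τ⁻¹ * y t) ^ 2)
        (Set.Ioi 0) →
      (∫ t in Set.Ioi (0:ℝ),
          ((deriv ystar t) ^ 2 + Δ ^ 2 * (deriv ystar t + τ⁻¹ * ystar t) ^ 2))
        ≤ ∫ t in Set.Ioi (0:ℝ),
            ((deriv y t) ^ 2 + Δ ^ 2 * (deriv y t + τ⁻¹ * y t) ^ 2) ∧
      ((∫ t in Set.Ioi (0:ℝ),
          ((deriv y t) ^ 2 + Δ ^ 2 * (deriv y t + τ⁻¹ * y t) ^ 2))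
        = ∫ t in Set.Ioi (0:ℝ),
            ((deriv ystar t) ^ 2 + Δ ^ 2 * (deriv ystar t + τ⁻¹ * ystar t) ^ 2) →
        ∀ t ≥ 0, y t = ystar t) := by
  have hτh_pos : 0 < τh := hτh ▸ mul_pos hτ (sqrt_pos.2 (by positivity))
  have hrates : (1 + Δ ^ 2) * τh⁻¹ ^ 2 = Δ ^ 2 * τ⁻¹ ^ 2 := by
    rw [hτh, inv_pow, mul_pow, sq_sqrt (by positivity)]
    field_simp
    ring
  have hystar_eq : ystar = fun t => y₀ * exp (-τh⁻¹ * t) := funext fun t => by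
    rw [hystar]; ring_nf
  have hystar_deriv : deriv ystar = fun t => -τh⁻¹ * ystar t := by
    subst hystar_eq; exact funext fun t => (hasDerivAt_const_mul_exp_neg_mul _ _ t).deriv
  have hystar_L2 : MemLp ystar 2 (volume.restrict (Ioi 0)) :=
    hystar_eq ▸ memLp_two_const_mul_exp_neg_mul y₀ (inv_pos.2 hτh_pos) 0
  have hJstar := (integrable_sq_add_mul_sq_add_iff_memLp hΔ.ne' (inv_ne_zero hτ.ne')
    (measurable_deriv ystar).aestronglyMeasurable hystar_L2.1).2
    ⟨hystar_deriv ▸ hystar_L2.const_mul _, hystar_L2⟩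
  obtain ⟨-, hJstar_eq⟩ := integral_Ioi_eq_complete_square hΔ.ne' (inv_ne_zero hτ.ne') hrates
    (hystar_eq ▸ fun t => (hasDerivAt_const_mul_exp_neg_mul _ _ t).differentiableAt) hJstar
  have hystar_res : ∀ t, deriv ystar t + τh⁻¹ * ystar t = 0 := fun t => by
    rw [hystar_deriv]; ring
  have hystar_zero : ystar 0 = y₀ := by simp [hystar]
  simp only [hystar_res, hystar_zero, zero_pow two_ne_zero, integral_zero, mul_zero,
    zero_sub] at hJstar_eq
  refine ⟨hJstar, fun y hy hy0 hJ => ?_⟩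
  obtain ⟨hres, hJ_eq⟩ := integral_Ioi_eq_complete_square hΔ.ne' (inv_ne_zero hτ.ne') hrates
    (hy.differentiable one_ne_zero) hJ
  have hres_nonneg : 0 ≤ ∫ t in Ioi 0, (deriv y t + τh⁻¹ * y t) ^ 2 :=
    setIntegral_nonneg measurableSet_Ioi fun t _ => sq_nonneg _
  refine ⟨by rw [hJ_eq, hJstar_eq, hy0]; nlinarith, fun heq t ht => ?_⟩
  have hres_zero : ∫ t in Ioi 0, (deriv y t + τh⁻¹ * y t) ^ 2 = 0 := by
    rw [hJ_eq, hJstar_eq, hy0] at heq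
    have hprod : (1 + Δ ^ 2) * ∫ t in Ioi 0, (deriv y t + τh⁻¹ * y t) ^ 2 = 0 := by linarith
    exact (mul_eq_zero.1 hprod).resolve_left (by positivity)
  have hode := eqOn_Ici_zero_of_integral_Ioi_sq_eq_zero
    ((hy.continuous_deriv le_rfl).add (continuous_const.mul hy.continuous)) hres hres_zero
  rw [eq_mul_exp_of_deriv_add_mul_eq_zero (hy.differentiable one_ne_zero) (fun s hs => hode hs)
    t ht, hystar_eq, hy0, sub_zero]
end
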